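/- arXiv:1308.0854 — 2 statements merged into one kernel-verified Lean document; each statement's English description precedes it below -/
import Mathlib

section
/- Let r, s ≥ 2 be integers and k a positive integer. Then sk(r²−1)/(r+sk) + rk(s²−1)/(s+rk) = k((rs)²−1)/(rs+k) if and only if k = 1. -/
/-- The embedding `sl(r) ⊕ sl(s) → sl(rs)` (Dynkin multi-index `(s,r)`)
satisfies the conformal anomaly equation
`c(sl(r), sk) + c(sl(s), rk) = c(sl(rs), k)` if and only if `k = 1`,
where `c(sl(n), ℓ) = ℓ (n² - 1)/(n + ℓ)`. -/
theorem conformal_iff_level_one_slA (r s k : ℕ) (hr : 2 ≤ r) (hs : 2 ≤ s) (hk : 0 < k) :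
    ((s : ℚ) * k * ((r : ℚ) ^ 2 - 1)) / ((r : ℚ) + s * k)
        + ((r : ℚ) * k * ((s : ℚ) ^ 2 - 1)) / ((s : ℚ) + r * k)
      = ((k : ℚ) * (((r : ℚ) * s) ^ 2 - 1)) / ((r : ℚ) * s + k)
    ↔ k = 1 := by
  have hrq : (2:ℚ) ≤ (r:ℚ) := by exact_mod_cast hr
  have hsq : (2:ℚ) ≤ (s:ℚ) := by exact_mod_cast hs
  have hkq : (1:ℚ) ≤ (k:ℚ) := by exact_mod_cast hk
  have hA : (r:ℚ) + s * k ≠ 0 := by positivity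
  have hB : (s:ℚ) + r * k ≠ 0 := by positivity
  have hC : (r:ℚ) * s + k ≠ 0 := by positivity
  constructor
  · intro h
    rw [div_add_div _ _ hA hB, div_eq_div_iff (by positivity) (by positivity)] at h
    have key : (r:ℚ) * s * k * (((r:ℚ)^2 - 1) * (((s:ℚ)^2 - 1) * ((k:ℚ)^2 - 1))) = 0 := by
      linear_combination -h
    have hk2 : (k:ℚ)^2 = 1 := by
      have h1 : (r:ℚ) * s * k ≠ 0 := by positivity
      have h2 : (r:ℚ)^2 - 1 ≠ 0 := by nlinarith
      have h3 : (s:ℚ)^2 - 1 ≠ 0 := by nlinarith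
      rcases mul_eq_zero.mp key with h' | h'
      · exact absurd h' h1
      · rcases mul_eq_zero.mp h' with h'' | h''
        · exact absurd h'' h2
        · rcases mul_eq_zero.mp h'' with h3' | h4
          · exact absurd h3' h3
          · linarith
    have : (k:ℚ) = 1 := by nlinarith
    exact_mod_cast this
  · rintro rfl
    push_cast
    field_simp
    ring
end

section
/- Let r, s ≥ 1 and let λ be a partition fitting in an r×s box (at most r parts, each part at most s), with d = |λ| boxes. Define C_r(λ) = Σᵢ₌₁^r λᵢ(λᵢ + r − 2i + 1) − d²/r, the normalized Casimir value of the sl(r)-weight attached to λ, and similarly C_s(λᵀ) for the conjugate partition λᵀ viewed in sl(s). Then C_r(λ) + C_s(λᵀ) = d(rs−d)(r+s)/(rs). Equivalently, the trace anomalies satisfy Δ_λ(sl(r),s) + Δ_{λᵀ}(sl(s),r) = Δ_{ω_d}(sl(rs),1) = d(rs−d)/(2rs), i.e. the difference of trace anomalies n^{ω_d}_{λ,λᵀ} vanishes. -/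
open Finset

private lemma sum_odd_range (n : ℕ) : ∑ k ∈ range n, (2 * (k : ℚ) + 1) = (n : ℚ) ^ 2 := by
  induction n with
  | zero => simp
  | succ n ih => rw [Finset.sum_range_succ, ih]; push_cast; ring

private lemma sum_odd_Icc (n : ℕ) : ∑ j ∈ Icc 1 n, (2 * (j : ℚ) - 1) = (n : ℚ) ^ 2 := by
  induction n with
  | zero => simp
  | succ n ih => rw [Finset.sum_Icc_succ_top (by omega), ih]; push_cast; ring

private lemma swap_sum (r s : ℕ) (f : Fin r → ℕ) (hbox : ∀ i, f i ≤ s)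
    (g : Fin r → ℕ → ℚ) :
    ∑ j ∈ Icc 1 s, ∑ i ∈ univ.filter (fun i : Fin r => j ≤ f i), g i j
      = ∑ i : Fin r, ∑ j ∈ Icc 1 (f i), g i j := by
  simp_rw [Finset.sum_filter]
  rw [Finset.sum_comm]
  refine Finset.sum_congr rfl fun i _ => ?_
  rw [← Finset.sum_filter]
  congr 1
  ext k
  simp only [mem_filter, mem_Icc]
  have := hbox i
  omega

private lemma filter_eq_lt (r : ℕ) (f : Fin r → ℕ) (hf : Antitone f) (j : ℕ) :
    (univ.filter fun i : Fin r => j ≤ f i)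
      = univ.filter fun i : Fin r => (i : ℕ) < (univ.filter fun i : Fin r => j ≤ f i).card := by
  ext i
  simp only [mem_filter, mem_univ, true_and]
  constructor
  · intro hi
    have hsub : Finset.Iic i ⊆ univ.filter fun i' : Fin r => j ≤ f i' := by
      intro i' hi'
      simp only [mem_Iic] at hi'
      simp only [mem_filter, mem_univ, true_and]
      exact le_trans hi (hf hi')
    have h1 := Finset.card_le_card hsub
    rw [Fin.card_Iic] at h1
    omega
  · intro hi
    by_contra h
    push_neg at h
    have hsub : (univ.filter fun i' : Fin r => j ≤ f i') ⊆ Finset.Iio i := by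
      intro i' hi'
      simp only [mem_filter, mem_univ, true_and] at hi'
      simp only [mem_Iio]
      by_contra h2
      push_neg at h2
      exact absurd (le_trans hi' (hf h2)) (by omega)
    have h1 := Finset.card_le_card hsub
    rw [Fin.card_Iio] at h1
    omega

private lemma sum_two_i (r t : ℕ) (ht : t ≤ r) :
    ∑ i ∈ univ.filter (fun i : Fin r => (i : ℕ) < t), (2 * ((i : ℕ) : ℚ) + 1)
      = (t : ℚ) ^ 2 := by
  rw [Finset.sum_filter,
    Fin.sum_univ_eq_sum_range (fun k => if k < t then (2 * (k : ℚ) + 1) else 0),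
    ← Finset.sum_filter]
  have h : (range r).filter (· < t) = range t := by
    ext k; simp only [mem_filter, mem_range]; omega
  rw [h, sum_odd_range]

/-- For a partition `λ` fitting in an `r × s` box with `d = |λ|` boxes, the
normalized Casimir values of the `sl(r)`-weight of `λ` and the `sl(s)`-weight of
the conjugate partition `λᵀ` satisfy
`C_r(λ) + C_s(λᵀ) = d(rs - d)(r + s)/(rs)`, where
`C_r(λ) = Σᵢ₌₁^r λᵢ(λᵢ + r - 2i + 1) - d²/r` and `λᵀⱼ = #{i : λᵢ ≥ j}`.
Equivalently `Δ_λ(sl(r),s) + Δ_{λᵀ}(sl(s),r) = Δ_{ω_d}(sl(rs),1)`. -/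
theorem casimir_rank_level_duality (r s : ℕ) (hr : 1 ≤ r) (hs : 1 ≤ s)
    (f : Fin r → ℕ) (hf : Antitone f) (hbox : ∀ i, f i ≤ s) :
    (∑ i : Fin r, (f i : ℚ) * ((f i : ℚ) + r - 2 * ((i : ℕ) + 1) + 1)
        - (∑ i : Fin r, (f i : ℚ)) ^ 2 / r)
      + (∑ j ∈ Finset.Icc 1 s,
          (((Finset.univ.filter fun i : Fin r => j ≤ f i).card : ℚ)
            * (((Finset.univ.filter fun i : Fin r => j ≤ f i).card : ℚ)
                + s - 2 * j + 1))
          - (∑ i : Fin r, (f i : ℚ)) ^ 2 / s)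
      = (∑ i : Fin r, (f i : ℚ)) * ((r : ℚ) * s - ∑ i : Fin r, (f i : ℚ))
          * ((r : ℚ) + s) / ((r : ℚ) * s) := by
  set T : ℕ → ℕ := fun j => (univ.filter fun i : Fin r => j ≤ f i).card with hT
  set d : ℚ := ∑ i : Fin r, (f i : ℚ) with hd
  set A : ℚ := ∑ i : Fin r, (f i : ℚ) ^ 2 with hA
  set B : ℚ := ∑ i : Fin r, (2 * ((i : ℕ) : ℚ) + 1) * (f i : ℚ) with hB
  -- T j as a sum
  have hTsum : ∀ j, (T j : ℚ) = ∑ i ∈ univ.filter (fun i : Fin r => j ≤ f i), (1 : ℚ) := by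
    intro j; simp [hT]
  -- d = Σ T j
  have hd2 : ∑ j ∈ Icc 1 s, (T j : ℚ) = d := by
    rw [hd]
    simp_rw [hTsum]
    rw [swap_sum r s f hbox (fun _ _ => 1)]
    simp
  -- Σ (2j-1) T j = A
  have hB2 : ∑ j ∈ Icc 1 s, (2 * (j : ℚ) - 1) * (T j : ℚ) = A := by
    rw [hA]
    have : ∀ j ∈ Icc 1 s, (2 * (j : ℚ) - 1) * (T j : ℚ)
        = ∑ i ∈ univ.filter (fun i : Fin r => j ≤ f i), (2 * (j : ℚ) - 1) := by
      intro j _; rw [hTsum j, Finset.mul_sum]; simp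
    rw [Finset.sum_congr rfl this, swap_sum r s f hbox (fun _ j => 2 * (j : ℚ) - 1)]
    exact Finset.sum_congr rfl fun i _ => sum_odd_Icc (f i)
  -- Σ (T j)^2 = B
  have hC : ∑ j ∈ Icc 1 s, (T j : ℚ) ^ 2 = B := by
    rw [hB]
    have hsq : ∀ j ∈ Icc 1 s, (T j : ℚ) ^ 2
        = ∑ i ∈ univ.filter (fun i : Fin r => j ≤ f i), (2 * ((i : ℕ) : ℚ) + 1) := by
      intro j _
      have hle : T j ≤ r := by
        simpa [hT] using Finset.card_le_card (Finset.filter_subset _ (univ : Finset (Fin r)))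
      rw [hT]
      conv_rhs => rw [filter_eq_lt r f hf j]
      exact (sum_two_i r _ hle).symm
    rw [Finset.sum_congr rfl hsq, swap_sum r s f hbox (fun i _ => 2 * ((i : ℕ) : ℚ) + 1)]
    refine Finset.sum_congr rfl fun i _ => ?_
    rw [Finset.sum_const, Nat.card_Icc]
    simp only [Nat.add_sub_cancel, nsmul_eq_mul]
    ring
  -- first big sum
  have h1 : ∑ i : Fin r, (f i : ℚ) * ((f i : ℚ) + r - 2 * ((i : ℕ) + 1) + 1)
      = A + r * d - B := by
    rw [hA, hd, hB, Finset.mul_sum, ← Finset.sum_add_distrib, ← Finset.sum_sub_distrib]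
    refine Finset.sum_congr rfl fun i _ => ?_
    ring
  -- second big sum
  have h2 : ∑ j ∈ Icc 1 s, ((T j : ℚ) * ((T j : ℚ) + s - 2 * j + 1))
      = B + s * d - A := by
    rw [← hC, ← hd2, ← hB2, Finset.mul_sum, ← Finset.sum_add_distrib,
      ← Finset.sum_sub_distrib]
    refine Finset.sum_congr rfl fun j _ => ?_
    ring
  rw [h1, h2]
  have hr0 : (r : ℚ) ≠ 0 := by positivity
  have hs0 : (s : ℚ) ≠ 0 := by positivity
  field_simp
  ring
end
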